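/- arXiv:2303.04859 — 2 statements merged into one kernel-verified Lean document; each statement's English description precedes it below -/
import Mathlib

section
/- Let (X,Y) be a pair of random variables where Y takes values in {-1,1}. Let f be a measurable {-1,1}-valued function of X, let p and p̃ be square-integrable real-valued measurable functions of X, and let ε ≥ 0. If E[(Y − p(X))²] ≤ E[(Y − p̃(X))²] and E[(f(X) − p̃(X))²] ≤ ε², then P{Y ≠ sign(p(X))} ≤ 8·P{Y ≠ f(X)} + 2ε². -/
/-!
A sign error of `p` at `ω` forces `(Y - p(X))² ≥ 1`, so by Markov's inequality the 0-1 loss of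
`sign ∘ p` is at most the square loss of `p`, hence at most that of `p̃`. By
`(a - c)² ≤ 2(a - b)² + 2(b - c)²` the latter is at most twice the square loss of `f` plus `2ε²`,
and for `{-1,1}`-valued `Y` and `f` the square loss `E[(Y - f(X))²]` is exactly `4·P{Y ≠ f(X)}`.
-/

open MeasureTheory ProbabilityTheory

/-- The sign function: `sign t = 1` if `t ≥ 0` and `-1` otherwise. -/
noncomputable def signFun (t : ℝ) : ℝ := if 0 ≤ t then 1 else -1

lemma one_le_sq_sub_of_ne_signFun {y t : ℝ} (hy : y = 1 ∨ y = -1) (h : y ≠ signFun t) :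
    1 ≤ (y - t) ^ 2 := by
  unfold signFun at h
  rcases hy with rfl | rfl <;> split_ifs at h with ht <;> first | exact absurd rfl h | nlinarith

lemma sq_sub_eq_ite_of_eq_one_or_eq_neg_one {a b : ℝ} (ha : a = 1 ∨ a = -1)
    (hb : b = 1 ∨ b = -1) :
    (a - b) ^ 2 = if a = b then 0 else 4 := by
  rcases ha with rfl | rfl <;> rcases hb with rfl | rfl <;> norm_num

section

variable {Ω : Type*} [MeasurableSpace Ω] {μ : Measure Ω}

lemma measureReal_le_integral_of_one_le [IsFiniteMeasure μ] {g : Ω → ℝ} (hg_nonneg : 0 ≤ g)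
    (hg : Integrable g μ) {s : Set Ω} (hs : ∀ ω ∈ s, 1 ≤ g ω) :
    μ.real s ≤ ∫ ω, g ω ∂μ :=
  calc μ.real s ≤ μ.real {ω | 1 ≤ g ω} := measureReal_mono hs
    _ ≤ ∫ ω, g ω ∂μ := by
      simpa using mul_meas_ge_le_integral_of_nonneg (ae_of_all _ hg_nonneg) hg 1

lemma memLp_of_forall_eq_one_or_eq_neg_one [IsFiniteMeasure μ] {Y : Ω → ℝ}
    (hY : AEStronglyMeasurable Y μ) (hYpm : ∀ ω, Y ω = 1 ∨ Y ω = -1) (q : ENNReal) :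
    MemLp Y q μ :=
  MemLp.of_bound hY 1 <| ae_of_all _ fun ω => by rcases hYpm ω with h | h <;> simp [h]

lemma integral_sq_sub_le_two_mul_add {a b c : Ω → ℝ} (ha : MemLp a 2 μ) (hb : MemLp b 2 μ)
    (hc : MemLp c 2 μ) :
    ∫ ω, (a ω - c ω) ^ 2 ∂μ
      ≤ 2 * ∫ ω, (a ω - b ω) ^ 2 ∂μ + 2 * ∫ ω, (b ω - c ω) ^ 2 ∂μ := by
  have hab : Integrable (fun ω => 2 * (a ω - b ω) ^ 2) μ := (ha.sub hb).integrable_sq.const_mul 2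
  have hbc : Integrable (fun ω => 2 * (b ω - c ω) ^ 2) μ := (hb.sub hc).integrable_sq.const_mul 2
  rw [← integral_const_mul, ← integral_const_mul, ← integral_add hab hbc]
  exact integral_mono (ha.sub hc).integrable_sq (hab.add hbc) fun ω => by
    dsimp; nlinarith [sq_nonneg (a ω - 2 * b ω + c ω)]

lemma integral_sq_sub_eq_four_mul_measureReal_ne {Y Z : Ω → ℝ} (hY : Measurable Y)
    (hZ : Measurable Z) (hYpm : ∀ ω, Y ω = 1 ∨ Y ω = -1) (hZpm : ∀ ω, Z ω = 1 ∨ Z ω = -1) :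
    ∫ ω, (Y ω - Z ω) ^ 2 ∂μ = 4 * μ.real {ω | Y ω ≠ Z ω} := by
  have hpointwise : (fun ω => (Y ω - Z ω) ^ 2) = {ω | Y ω ≠ Z ω}.indicator fun _ => 4 := by
    ext ω
    rw [sq_sub_eq_ite_of_eq_one_or_eq_neg_one (hYpm ω) (hZpm ω), Set.indicator_apply]
    split_ifs <;> simp_all
  have hmeas : MeasurableSet {ω | Y ω ≠ Z ω} := (measurableSet_eq_fun hY hZ).compl
  rw [hpointwise, integral_indicator_const _ hmeas, smul_eq_mul, mul_comm]

end

theorem sign_L2_regression_weak_pac_general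
    {Ω 𝓧 : Type*} [MeasurableSpace Ω] [MeasurableSpace 𝓧]
    (μ : Measure Ω) [IsProbabilityMeasure μ]
    (X : Ω → 𝓧) (Y : Ω → ℝ) (f p ptil : 𝓧 → ℝ) (ε : ℝ)
    (hX : Measurable X) (hY : Measurable Y)
    (hf : Measurable f) (hfpm : ∀ x, f x = 1 ∨ f x = -1)
    (hYpm : ∀ ω, Y ω = 1 ∨ Y ω = -1)
    (hp2 : MemLp (fun ω => p (X ω)) 2 μ)
    (hptil2 : MemLp (fun ω => ptil (X ω)) 2 μ)
    (hopt : ∫ ω, (Y ω - p (X ω)) ^ 2 ∂μ ≤ ∫ ω, (Y ω - ptil (X ω)) ^ 2 ∂μ)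
    (happrox : ∫ ω, (f (X ω) - ptil (X ω)) ^ 2 ∂μ ≤ ε ^ 2) :
    (μ {ω | Y ω ≠ signFun (p (X ω))}).toReal
      ≤ 8 * (μ {ω | Y ω ≠ f (X ω)}).toReal + 2 * ε ^ 2 := by
  have hfX : Measurable fun ω => f (X ω) := hf.comp hX
  have hYL2 := memLp_of_forall_eq_one_or_eq_neg_one hY.aestronglyMeasurable hYpm 2 (μ := μ)
  have hfL2 := memLp_of_forall_eq_one_or_eq_neg_one hfX.aestronglyMeasurable
    (fun ω => hfpm (X ω)) 2 (μ := μ)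
  calc μ.real {ω | Y ω ≠ signFun (p (X ω))}
      ≤ ∫ ω, (Y ω - p (X ω)) ^ 2 ∂μ :=
        measureReal_le_integral_of_one_le (fun ω => sq_nonneg _) (hYL2.sub hp2).integrable_sq
          fun ω h => one_le_sq_sub_of_ne_signFun (hYpm ω) h
    _ ≤ ∫ ω, (Y ω - ptil (X ω)) ^ 2 ∂μ := hopt
    _ ≤ 2 * ∫ ω, (Y ω - f (X ω)) ^ 2 ∂μ + 2 * ∫ ω, (f (X ω) - ptil (X ω)) ^ 2 ∂μ :=
        integral_sq_sub_le_two_mul_add hYL2 hfL2 hptil2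
    _ ≤ 8 * μ.real {ω | Y ω ≠ f (X ω)} + 2 * ε ^ 2 := by
        rw [integral_sq_sub_eq_four_mul_measureReal_ne hY hfX hYpm fun ω => hfpm (X ω)]
        linarith

/-- If `p` minimizes the square loss at least as well as `p̃`, and `p̃`
approximates a `{-1,1}`-valued predictor `f` within square error `ε²`, then
`P{Y ≠ sign(p(X))} ≤ 8·P{Y ≠ f(X)} + 2ε²`. -/
theorem sign_L2_regression_weak_pac
    {Ω 𝓧 : Type*} [MeasurableSpace Ω] [MeasurableSpace 𝓧]
    (μ : Measure Ω) [IsProbabilityMeasure μ]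
    (X : Ω → 𝓧) (Y : Ω → ℝ) (f p ptil : 𝓧 → ℝ) (ε : ℝ) (hε : 0 ≤ ε)
    (hX : Measurable X) (hY : Measurable Y)
    (hf : Measurable f) (hfpm : ∀ x, f x = 1 ∨ f x = -1)
    (hYpm : ∀ ω, Y ω = 1 ∨ Y ω = -1)
    (hp : Measurable p) (hptil : Measurable ptil)
    (hp2 : MemLp (fun ω => p (X ω)) 2 μ)
    (hptil2 : MemLp (fun ω => ptil (X ω)) 2 μ)
    (hopt : ∫ ω, (Y ω - p (X ω)) ^ 2 ∂μ ≤ ∫ ω, (Y ω - ptil (X ω)) ^ 2 ∂μ)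
    (happrox : ∫ ω, (f (X ω) - ptil (X ω)) ^ 2 ∂μ ≤ ε ^ 2) :
    (μ {ω | Y ω ≠ signFun (p (X ω))}).toReal
      ≤ 8 * (μ {ω | Y ω ≠ f (X ω)}).toReal + 2 * ε ^ 2 :=
  sign_L2_regression_weak_pac_general μ X Y f p ptil ε hX hY hf hfpm hYpm hp2 hptil2 hopt happrox
end

section
/- Let (Y,Z) be a pair of random variables where Y takes values in {-1,1} and Z takes values in a measurable space 𝒵, and let h: 𝒵 → ℝ be a bounded measurable function. Define opt_Z = inf over measurable g: 𝒵 → {-1,1} of P{Y ≠ g(Z)}, and U(x) = x³ + (3/2)x² + (3/2)x. Then P{Y ≠ sign(h(Z))} ≤ opt_Z + U( √( E[(E[Y | Z] − h(Z))²] ) ). -/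
open MeasureTheory ProbabilityTheory

noncomputable def Upoly (x : ℝ) : ℝ := x ^ 3 + (3 / 2) * x ^ 2 + (3 / 2) * x

lemma signFun_eq_one_or_eq_neg_one (t : ℝ) : signFun t = 1 ∨ signFun t = -1 := by
  unfold signFun; split_ifs <;> simp

lemma measurable_signFun : Measurable signFun :=
  Measurable.ite (measurableSet_le measurable_const measurable_id) measurable_const
    measurable_const

lemma sub_signFun_mul_le {g : ℝ} (hg : g = 1 ∨ g = -1) (a t : ℝ) :
    (g - signFun t) * a ≤ 2 * |a - t| := by
  rcases hg with rfl | rfl <;> unfold signFun <;> split_ifs <;>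
    cases abs_cases (a - t) <;> nlinarith

lemma le_Upoly {x : ℝ} (hx : 0 ≤ x) : x ≤ Upoly x := by
  unfold Upoly; nlinarith

section

variable {Ω : Type*} {m mΩ : MeasurableSpace Ω} {μ : Measure Ω}

lemma integral_abs_le_sqrt_integral_sq [IsProbabilityMeasure μ] {f : Ω → ℝ} (hf : MemLp f 2 μ) :
    ∫ ω, |f ω| ∂μ ≤ √(∫ ω, f ω ^ 2 ∂μ) := by
  have hvar := variance_nonneg |f| μ
  rw [variance_eq_sub hf.abs] at hvar
  simp only [Pi.pow_apply, Pi.abs_apply, sq_abs] at hvar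
  exact (le_abs_self _).trans (Real.abs_le_sqrt (by linarith))

lemma indicator_ne_eq {Y W : Ω → ℝ} {ω : Ω} (hY : Y ω = 1 ∨ Y ω = -1)
    (hW : W ω = 1 ∨ W ω = -1) :
    {x | Y x ≠ W x}.indicator 1 ω = (1 - Y ω * W ω) / 2 := by
  rcases hY with hY | hY <;> rcases hW with hW | hW <;> norm_num [Set.indicator_apply, hY, hW]

lemma measureReal_ne_sub_measureReal_ne [IsFiniteMeasure μ] {Y W₁ W₂ : Ω → ℝ}
    (hY : Measurable Y) (hW₁ : Measurable W₁) (hW₂ : Measurable W₂)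
    (hYpm : ∀ ω, Y ω = 1 ∨ Y ω = -1) (hW₁pm : ∀ ω, W₁ ω = 1 ∨ W₁ ω = -1)
    (hW₂pm : ∀ ω, W₂ ω = 1 ∨ W₂ ω = -1) :
    μ.real {ω | Y ω ≠ W₁ ω} - μ.real {ω | Y ω ≠ W₂ ω} = (∫ ω, (W₂ ω - W₁ ω) * Y ω ∂μ) / 2 := by
  have hs₁ : MeasurableSet {ω | Y ω ≠ W₁ ω} := (measurableSet_eq_fun hY hW₁).compl
  have hs₂ : MeasurableSet {ω | Y ω ≠ W₂ ω} := (measurableSet_eq_fun hY hW₂).compl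
  rw [← integral_indicator_one hs₁, ← integral_indicator_one hs₂,
    ← integral_sub ((integrable_const 1).indicator hs₁) ((integrable_const 1).indicator hs₂),
    ← integral_div]
  congr 1 with ω
  rw [indicator_ne_eq (hYpm ω) (hW₁pm ω), indicator_ne_eq (hYpm ω) (hW₂pm ω)]
  ring

lemma integral_mul_condExp_of_stronglyMeasurable [IsFiniteMeasure μ]
    (hm : m ≤ mΩ) {ξ Y : Ω → ℝ} {C : ℝ} (hξ : StronglyMeasurable[m] ξ) (hξC : ∀ ω, |ξ ω| ≤ C)
    (hY : Integrable Y μ) :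
    ∫ ω, ξ ω * Y ω ∂μ = ∫ ω, ξ ω * (μ[Y | m]) ω ∂μ := by
  have hξY : Integrable (ξ * Y) μ :=
    hY.bdd_mul (hξ.mono hm).aestronglyMeasurable (ae_of_all _ hξC)
  calc ∫ ω, ξ ω * Y ω ∂μ = ∫ ω, (μ[ξ * Y | m]) ω ∂μ := (integral_condExp hm).symm
    _ = ∫ ω, ξ ω * (μ[Y | m]) ω ∂μ :=
      integral_congr_ae (condExp_mul_of_stronglyMeasurable_left hξ hξY hY)

theorem measureReal_ne_signFun_le [IsFiniteMeasure μ] (hm : m ≤ mΩ)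
    {Y H G : Ω → ℝ} (hY : Measurable Y) (hYpm : ∀ ω, Y ω = 1 ∨ Y ω = -1)
    (hH : Measurable[m] H) (hHint : Integrable H μ)
    (hG : Measurable[m] G) (hGpm : ∀ ω, G ω = 1 ∨ G ω = -1) :
    μ.real {ω | Y ω ≠ signFun (H ω)}
      ≤ μ.real {ω | Y ω ≠ G ω} + ∫ ω, |(μ[Y | m]) ω - H ω| ∂μ := by
  have hsH : Measurable[m] (fun ω => signFun (H ω)) := measurable_signFun.comp hH
  have hψ : StronglyMeasurable[m] (fun ω => G ω - signFun (H ω)) :=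
    (hG.sub hsH).stronglyMeasurable
  have hsHpm (ω : Ω) := signFun_eq_one_or_eq_neg_one (H ω)
  have hψC (ω : Ω) : |G ω - signFun (H ω)| ≤ 2 := by
    rcases hGpm ω with h₁ | h₁ <;> rcases hsHpm ω with h₂ | h₂ <;> rw [h₁, h₂] <;> norm_num
  have hYint : Integrable Y μ :=
    (integrable_const 1).mono' hY.aestronglyMeasurable
      (ae_of_all _ fun ω => by rcases hYpm ω with h | h <;> simp [h])
  have hψη : Integrable (fun ω => (G ω - signFun (H ω)) * (μ[Y | m]) ω) μ :=
    integrable_condExp.bdd_mul (hψ.mono hm).aestronglyMeasurable (ae_of_all _ hψC)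
  calc μ.real {ω | Y ω ≠ signFun (H ω)}
      = μ.real {ω | Y ω ≠ G ω} + (∫ ω, (G ω - signFun (H ω)) * Y ω ∂μ) / 2 := by
        linarith [measureReal_ne_sub_measureReal_ne (μ := μ) hY (hsH.mono hm le_rfl)
          (hG.mono hm le_rfl) hYpm hsHpm hGpm]
    _ = μ.real {ω | Y ω ≠ G ω} + (∫ ω, (G ω - signFun (H ω)) * (μ[Y | m]) ω ∂μ) / 2 := by
        rw [integral_mul_condExp_of_stronglyMeasurable hm hψ hψC hYint]
    _ ≤ μ.real {ω | Y ω ≠ G ω} + (∫ ω, 2 * |(μ[Y | m]) ω - H ω| ∂μ) / 2 := by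
        gcongr _ + ?_ / 2
        exact integral_mono hψη ((integrable_condExp.sub hHint).abs.const_mul 2)
          fun ω => sub_signFun_mul_le (hGpm ω) _ _
    _ = μ.real {ω | Y ω ≠ G ω} + ∫ ω, |(μ[Y | m]) ω - H ω| ∂μ := by
        rw [integral_const_mul]; ring

end

/-- For any bounded measurable `h : 𝒵 → ℝ`,
`P{Y ≠ sign(h(Z))} ≤ opt_Z + U(√(E[(E[Y|Z] - h(Z))²]))`, where `opt_Z` is the minimum
0-1 loss among all measurable `{-1,1}`-valued predictors of `Y` from `Z`, and
`U(x) = x³ + (3/2)x² + (3/2)x`. -/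
theorem loss_sign_le_opt_add_U_of_mmse_dist
    {Ω 𝓩 : Type*} [MeasurableSpace Ω] [MeasurableSpace 𝓩]
    (μ : Measure Ω) [IsProbabilityMeasure μ]
    (Z : Ω → 𝓩) (Y : Ω → ℝ) (h : 𝓩 → ℝ)
    (hZ : Measurable Z) (hY : Measurable Y)
    (hYpm : ∀ ω, Y ω = 1 ∨ Y ω = -1)
    (hh : Measurable h) (hbd : ∃ C, ∀ z, |h z| ≤ C) :
    (μ {ω | Y ω ≠ signFun (h (Z ω))}).toReal
      ≤ (⨅ g : {g : 𝓩 → ℝ // Measurable g ∧ ∀ z, g z = 1 ∨ g z = -1},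
            (μ {ω | Y ω ≠ g.1 (Z ω)}).toReal)
        + Upoly (Real.sqrt
            (∫ ω, ((μ[Y | MeasurableSpace.comap Z inferInstance]) ω - h (Z ω)) ^ 2 ∂μ)) := by
  obtain ⟨C, hC⟩ := hbd
  set m := MeasurableSpace.comap Z inferInstance
  have hm : m ≤ _ := hZ.comap_le
  have hhZ : Measurable[m] (h ∘ Z) := hh.comp (comap_measurable Z)
  have hY2 : MemLp Y 2 μ := .of_bound hY.aestronglyMeasurable 1
    (ae_of_all _ fun ω => by rcases hYpm ω with h | h <;> simp [h])
  have hhZ2 : MemLp (h ∘ Z) 2 μ :=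
    .of_bound (hhZ.mono hm le_rfl).aestronglyMeasurable C (ae_of_all _ fun ω => hC (Z ω))
  have : Nonempty {g : 𝓩 → ℝ // Measurable g ∧ ∀ z, g z = 1 ∨ g z = -1} :=
    ⟨⟨fun _ => 1, measurable_const, fun _ => Or.inl rfl⟩⟩
  refine sub_le_iff_le_add.mp (le_ciInf fun g => sub_le_iff_le_add.mpr ?_)
  calc μ.real {ω | Y ω ≠ signFun (h (Z ω))}
      ≤ μ.real {ω | Y ω ≠ g.1 (Z ω)} + ∫ ω, |(μ[Y | m]) ω - h (Z ω)| ∂μ :=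
        measureReal_ne_signFun_le hm hY hYpm hhZ (hhZ2.integrable one_le_two)
          (g.2.1.comp (comap_measurable Z)) fun ω => g.2.2 (Z ω)
    _ ≤ μ.real {ω | Y ω ≠ g.1 (Z ω)} + √(∫ ω, ((μ[Y | m]) ω - h (Z ω)) ^ 2 ∂μ) :=
        by gcongr; exact integral_abs_le_sqrt_integral_sq ((hY2.condExp one_le_two).sub hhZ2)
    _ ≤ μ.real {ω | Y ω ≠ g.1 (Z ω)} + Upoly √(∫ ω, ((μ[Y | m]) ω - h (Z ω)) ^ 2 ∂μ) := by
        gcongr; exact le_Upoly (Real.sqrt_nonneg _)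
end
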